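/- Subsampled Toeplitz masks: Let A ∈ ℝ^{n×n}, let p ≥ 1 be an integer, and let W ∈ {0,1}^{n×n} be the Toeplitz mask with W_{i,j} = 0 if and only if i ≡ j (mod p). Then for every k' ≥ 4pk and every matrix L of rank at most k' satisfying ‖A ∘ W − L‖_F² ≤ (min over matrices L̂ of rank at most k' of ‖A ∘ W − L̂‖_F²) + Δ for some Δ ≥ 0, it holds that ‖(A − L) ∘ W‖_F² ≤ OPT + Δ, where OPT = min over matrices L̂ of rank at most k of ‖(A − L̂) ∘ W‖_F². -/

import Mathlib

open Matrix BigOperators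

/-- Squared Frobenius norm. -/
noncomputable def frob2 {n p : ℕ} (M : Matrix (Fin n) (Fin p) ℝ) : ℝ :=
  ∑ i, ∑ j, (M i j) ^ 2

/-!
For `p ≥ 1` the mask `W` vanishes exactly on the blocks `i % p = j % p`, so with the diagonal
projections `D_r` onto the residue class `r` we get `M ∘ W = ∑_{r < p} D_r M (1 - D_r)`, a sum
of `p` matrices of rank at most `rank M`. Hence `L̂ ∘ W` is a competitor of rank at most
`p k ≤ k'` in the unmasked problem, which gives `OPT(k') ≤ OPT`, while masking `A - L` only
erases entries of `A ∘ W - L`, so `‖(A - L) ∘ W‖_F² ≤ ‖A ∘ W - L‖_F² ≤ OPT(k') + Δ`.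
-/

namespace Matrix

variable {m n ι κ K : Type*} [Fintype n] [Field K]

lemma rank_add_le (A B : Matrix m n K) : (A + B).rank ≤ A.rank + B.rank := by
  have hrange : LinearMap.range (A + B).mulVecLin ≤
      LinearMap.range A.mulVecLin ⊔ LinearMap.range B.mulVecLin := by
    rw [mulVecLin_add]
    rintro _ ⟨v, rfl⟩
    exact Submodule.add_mem_sup (LinearMap.mem_range_self _ v) (LinearMap.mem_range_self _ v)
  exact (Submodule.finrank_mono hrange).trans (Submodule.finrank_add_le_finrank_add_finrank _ _)

lemma rank_sum_le (s : Finset ι) (f : ι → Matrix m n K) :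
    (∑ r ∈ s, f r).rank ≤ ∑ r ∈ s, (f r).rank :=
  Finset.le_sum_of_subadditive rank (rank_zero (R := K)).le rank_add_le s f

variable [Fintype ι] [DecidableEq ι] [DecidableEq κ]

def colorProj (c : ι → κ) (r : κ) : Matrix ι ι K :=
  diagonal fun i => if c i = r then 1 else 0

def offColorMask (c : ι → κ) : Matrix ι ι K :=
  of fun i j => if c i = c j then 0 else 1

lemma hadamard_offColorMask_eq_sum {c : ι → κ} {s : Finset κ} (hs : ∀ i, c i ∈ s)
    (M : Matrix ι ι K) :
    M ⊙ offColorMask c = ∑ r ∈ s, colorProj c r * M * (1 - colorProj c r) := by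
  ext i j
  simp only [hadamard_apply, offColorMask, of_apply, sum_apply, colorProj, mul_sub, mul_one,
    sub_apply, mul_diagonal, diagonal_mul, ite_mul, one_mul, zero_mul, mul_ite, mul_zero]
  by_cases hij : c i = c j
  · simp [← hij, Finset.sum_ite_eq, hs]
  · have hne (r : κ) : ¬(c j = r ∧ c i = r) := fun h => hij (h.2.trans h.1.symm)
    simp [hij, Finset.sum_ite_eq, hs, ← ite_and, hne]

lemma rank_hadamard_offColorMask_le {c : ι → κ} {s : Finset κ} (hs : ∀ i, c i ∈ s)
    (M : Matrix ι ι K) : (M ⊙ offColorMask c).rank ≤ s.card * M.rank := by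
  rw [hadamard_offColorMask_eq_sum hs]
  calc (∑ r ∈ s, colorProj c r * M * (1 - colorProj c r)).rank
      ≤ ∑ r ∈ s, (colorProj c r * M * (1 - colorProj c r)).rank := rank_sum_le _ _
    _ ≤ ∑ _r ∈ s, M.rank := by
        gcongr
        exact (rank_mul_le_left _ _).trans (rank_mul_le_right _ _)
    _ = s.card * M.rank := by rw [Finset.sum_const, smul_eq_mul]

end Matrix

lemma eq_offColorMask_mod {n p : ℕ} (W : Matrix (Fin n) (Fin n) ℝ)
    (hWbin : ∀ i j, W i j = 0 ∨ W i j = 1)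
    (hW : ∀ i j : Fin n, W i j = 0 ↔ (p : ℤ) ∣ ((i : ℤ) - (j : ℤ))) :
    W = offColorMask fun i : Fin n => (i : ℕ) % p := by
  ext i j
  have hmod : W i j = 0 ↔ (i : ℕ) % p = (j : ℕ) % p := by
    rw [hW, ← Nat.modEq_iff_dvd]
    exact Nat.ModEq.comm
  rw [offColorMask, of_apply]
  split_ifs with hij
  · exact hmod.2 hij
  · exact (hWbin i j).resolve_left (mt hmod.1 hij)

lemma frob2_nonneg {m n : ℕ} (M : Matrix (Fin m) (Fin n) ℝ) : 0 ≤ frob2 M :=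
  Finset.sum_nonneg fun _ _ => Finset.sum_nonneg fun _ _ => sq_nonneg _

lemma frob2_hadamard_sub_le {m n : ℕ} {W : Matrix (Fin m) (Fin n) ℝ}
    (hWbin : ∀ i j, W i j = 0 ∨ W i j = 1) (A L : Matrix (Fin m) (Fin n) ℝ) :
    frob2 ((A - L) ⊙ W) ≤ frob2 (A ⊙ W - L) := by
  refine Finset.sum_le_sum fun i _ => Finset.sum_le_sum fun j _ => ?_
  rcases hWbin i j with h | h <;> simp [h, sq_nonneg]

lemma sInf_frob2_le_sInf_frob2_hadamard {n k k' : ℕ} {W : Matrix (Fin n) (Fin n) ℝ}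
    (hrank : ∀ M : Matrix (Fin n) (Fin n) ℝ, M.rank ≤ k → (M ⊙ W).rank ≤ k')
    (A : Matrix (Fin n) (Fin n) ℝ) :
    sInf {x : ℝ | ∃ M : Matrix (Fin n) (Fin n) ℝ, M.rank ≤ k' ∧ x = frob2 (A ⊙ W - M)} ≤
      sInf {x : ℝ | ∃ M : Matrix (Fin n) (Fin n) ℝ, M.rank ≤ k ∧ x = frob2 ((A - M) ⊙ W)} := by
  refine le_csInf ⟨_, 0, by rw [rank_zero]; exact Nat.zero_le k, rfl⟩ ?_
  rintro _ ⟨M, hM, rfl⟩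
  refine csInf_le ⟨0, ?_⟩ ⟨M ⊙ W, hrank M hM, ?_⟩
  · rintro _ ⟨_, _, rfl⟩
    exact frob2_nonneg _
  · congr 1
    ext i j
    simp [sub_mul]

theorem stmt5_general
    {n k k' p : ℕ} (hp : 1 ≤ p)
    (A : Matrix (Fin n) (Fin n) ℝ)
    (W : Matrix (Fin n) (Fin n) ℝ)
    (hWbin : ∀ i j, W i j = 0 ∨ W i j = 1)
    (hW : ∀ i j : Fin n, W i j = 0 ↔ (p : ℤ) ∣ ((i : ℤ) - (j : ℤ)))
    (hk' : 4 * p * k ≤ k')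
    (Δ : ℝ)
    (L : Matrix (Fin n) (Fin n) ℝ)
    (hL_near : frob2 (Matrix.hadamard A W - L) ≤
      sInf {x : ℝ | ∃ M : Matrix (Fin n) (Fin n) ℝ, M.rank ≤ k' ∧
        x = frob2 (Matrix.hadamard A W - M)} + Δ) :
    frob2 (Matrix.hadamard (A - L) W) ≤
      sInf {x : ℝ | ∃ M : Matrix (Fin n) (Fin n) ℝ, M.rank ≤ k ∧
        x = frob2 (Matrix.hadamard (A - M) W)} + Δ := by
  have hrank (M : Matrix (Fin n) (Fin n) ℝ) (hM : M.rank ≤ k) : (M ⊙ W).rank ≤ k' := by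
    have hres (i : Fin n) : (i : ℕ) % p ∈ Finset.range p := Finset.mem_range.2 (Nat.mod_lt _ hp)
    calc (M ⊙ W).rank
        ≤ (Finset.range p).card * M.rank := by
          rw [eq_offColorMask_mod W hWbin hW]
          exact rank_hadamard_offColorMask_le hres M
      _ ≤ 4 * p * k := by rw [Finset.card_range]; nlinarith
      _ ≤ k' := hk'
  calc frob2 ((A - L) ⊙ W)
      ≤ frob2 (A ⊙ W - L) := frob2_hadamard_sub_le hWbin A L
    _ ≤ _ := hL_near
    _ ≤ _ := add_le_add_left (sInf_frob2_le_sInf_frob2_hadamard hrank A) Δ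

/-- subsampled Toeplitz masks, `W_{i,j} = 0` iff `i ≡ j (mod p)`. -/
theorem stmt5
    {n k k' p : ℕ} (hp : 1 ≤ p)
    (A : Matrix (Fin n) (Fin n) ℝ)
    (W : Matrix (Fin n) (Fin n) ℝ)
    (hWbin : ∀ i j, W i j = 0 ∨ W i j = 1)
    (hW : ∀ i j : Fin n, W i j = 0 ↔ (p : ℤ) ∣ ((i : ℤ) - (j : ℤ)))
    (hk' : 4 * p * k ≤ k')
    (Δ : ℝ) (hΔ : 0 ≤ Δ)
    (L : Matrix (Fin n) (Fin n) ℝ) (hL_rank : L.rank ≤ k')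
    (hL_near : frob2 (Matrix.hadamard A W - L) ≤
      sInf {x : ℝ | ∃ M : Matrix (Fin n) (Fin n) ℝ, M.rank ≤ k' ∧
        x = frob2 (Matrix.hadamard A W - M)} + Δ) :
    frob2 (Matrix.hadamard (A - L) W) ≤
      sInf {x : ℝ | ∃ M : Matrix (Fin n) (Fin n) ℝ, M.rank ≤ k ∧
        x = frob2 (Matrix.hadamard (A - M) W)} + Δ :=
  stmt5_general hp A W hWbin hW hk' Δ L hL_near
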